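/- For every x ∈ ℝ^n, the Jacobian matrix (dF/dx)(x) is diagonalizable over ℝ: there exist an invertible matrix Q ∈ ℝ^{n×n} and a diagonal matrix D ∈ ℝ^{n×n} such that (dF/dx)(x) = Q D Q^{-1}. -/

import Mathlib

/-!
By the chain rule the Jacobian at `x` is `diag(w)⁻¹ · (K diag(b / u²) Kᵀ) · diag(eˣ)`,
where `u = Kᵀ eˣ` and `w = K (b / u)` are positive: a symmetric matrix `M` between two
positive diagonal matrices `diag α`, `diag β`. With `s = √(α / β)` and `g = √(α β)`,
`diag α · M · diag β = diag s · (diag g · M · diag g) · (diag s)⁻¹`, and the middle factor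
is symmetric, hence diagonalizable by the spectral theorem.
-/

open Finset Matrix

namespace Matrix

variable {ι : Type*} [Fintype ι] [DecidableEq ι]

def IsDiagonalizable {R : Type*} [CommRing R] (A : Matrix ι ι R) : Prop :=
  ∃ (Q : Matrix ι ι R) (d : ι → R), IsUnit Q.det ∧ A = Q * diagonal d * Q⁻¹

theorem IsDiagonalizable.conj {R : Type*} [CommRing R] {A P : Matrix ι ι R}
    (hA : A.IsDiagonalizable) (hP : IsUnit P.det) : (P * A * P⁻¹).IsDiagonalizable := by
  obtain ⟨Q, d, hQ, rfl⟩ := hA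
  refine ⟨P * Q, d, by rw [det_mul]; exact hP.mul hQ, ?_⟩
  rw [mul_inv_rev]
  simp only [Matrix.mul_assoc]

theorem IsHermitian.isDiagonalizable {A : Matrix ι ι ℝ} (hA : A.IsHermitian) :
    A.IsDiagonalizable := by
  set U : Matrix ι ι ℝ := (hA.eigenvectorUnitary : Matrix ι ι ℝ)
  have hU : U * star U = 1 := mem_unitaryGroup_iff.mp hA.eigenvectorUnitary.2
  refine ⟨U, hA.eigenvalues, isUnit_det_of_right_inverse hU, ?_⟩
  rw [inv_eq_right_inv hU]
  simpa using hA.spectral_theorem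

theorem IsHermitian.isDiagonalizable_diagonal_mul_mul_diagonal {M : Matrix ι ι ℝ}
    (hM : M.IsHermitian) {α β : ι → ℝ} (hα : ∀ i, 0 < α i) (hβ : ∀ i, 0 < β i) :
    (diagonal α * M * diagonal β).IsDiagonalizable := by
  set s : ι → ℝ := fun i => √(α i) / √(β i)
  set g : ι → ℝ := fun i => √(α i) * √(β i)
  have hs : ∀ i, s i ≠ 0 := fun i =>
    (div_pos (Real.sqrt_pos.2 (hα i)) (Real.sqrt_pos.2 (hβ i))).ne'
  have hs_inv : (diagonal s)⁻¹ = diagonal s⁻¹ := by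
    refine inv_eq_right_inv ?_
    rw [diagonal_mul_diagonal, ← diagonal_one]
    exact congrArg diagonal (funext fun i => mul_inv_cancel₀ (hs i))
  have hN : (diagonal g * M * diagonal g).IsHermitian := by
    simpa using isHermitian_mul_mul_conjTranspose (diagonal g) hM
  have hsim : diagonal α * M * diagonal β
      = diagonal s * (diagonal g * M * diagonal g) * (diagonal s)⁻¹ := by
    ext i j
    simp only [hs_inv, mul_diagonal, diagonal_mul, Pi.inv_apply, s, g]
    have := Real.sqrt_pos.2 (hβ i)
    have := Real.sqrt_pos.2 (hα j)
    field_simp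
    rw [Real.sq_sqrt (hα i).le, Real.sq_sqrt (hβ j).le]
    ring
  rw [hsim]
  exact hN.isDiagonalizable.conj (by simp [det_diagonal, prod_ne_zero_iff, hs])

end Matrix

section Sinkhorn

variable {ι κ μ : Type*} [Fintype ι] [Fintype κ]

theorem Matrix.mulVec_pos_of_pos [Nonempty ι] {A : Matrix μ ι ℝ} (hA : ∀ k i, 0 < A k i)
    {v : ι → ℝ} (hv : ∀ i, 0 < v i) (k : μ) : 0 < (A *ᵥ v) k :=
  sum_pos (fun i _ => mul_pos (hA k i) (hv i)) univ_nonempty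

theorem toContinuousLinearMap_toLin'_comp [DecidableEq ι] [DecidableEq κ] (A : Matrix μ κ ℝ)
    (B : Matrix κ ι ℝ) :
    (LinearMap.toContinuousLinearMap (toLin' A)).comp (LinearMap.toContinuousLinearMap (toLin' B))
      = LinearMap.toContinuousLinearMap (toLin' (A * B)) := by
  ext v : 1
  simp [mulVec_mulVec]

theorem hasFDerivAt_mulVec [DecidableEq ι] (A : Matrix μ ι ℝ) (x : ι → ℝ) :
    HasFDerivAt (A *ᵥ ·) (LinearMap.toContinuousLinearMap (toLin' A)) x :=
  (LinearMap.toContinuousLinearMap (toLin' A)).hasFDerivAt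

theorem hasFDerivAt_pi_map [DecidableEq ι] {f : ι → ℝ → ℝ} {f' x : ι → ℝ}
    (hf : ∀ i, HasDerivAt (f i) (f' i) (x i)) :
    HasFDerivAt (fun y i => f i (y i))
      (LinearMap.toContinuousLinearMap (toLin' (diagonal f'))) x := by
  refine hasFDerivAt_pi'' fun i => ?_
  have hproj := hasFDerivAt_apply (𝕜 := ℝ) (F' := fun _ : ι => ℝ) i x
  refine ((hf i).comp_hasFDerivAt x hproj).congr_fderiv ?_
  ext v
  simp [mulVec_diagonal]

noncomputable def sinkhornMap (a : ι → ℝ) (b : κ → ℝ) (K : Matrix ι κ ℝ) (y : ι → ℝ) : ι → ℝ :=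
  fun i => Real.log (a i) - Real.log ((K *ᵥ (b / (Kᵀ *ᵥ (Real.exp ∘ y)))) i)

theorem mulVec_div_mulVec_exp_pos [Nonempty ι] [Nonempty κ] {b : κ → ℝ} {K : Matrix ι κ ℝ}
    (hb : ∀ j, 0 < b j) (hK : ∀ i j, 0 < K i j) (x : ι → ℝ) (i : ι) :
    0 < (K *ᵥ (b / (Kᵀ *ᵥ (Real.exp ∘ x)))) i :=
  mulVec_pos_of_pos hK (fun j => div_pos (hb j)
    (mulVec_pos_of_pos (fun j i => hK i j) (fun i => Real.exp_pos (x i)) j)) i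

theorem fderiv_sinkhornMap [DecidableEq ι] [DecidableEq κ] [Nonempty ι] [Nonempty κ]
    (a : ι → ℝ) {b : κ → ℝ} {K : Matrix ι κ ℝ} (hb : ∀ j, 0 < b j) (hK : ∀ i j, 0 < K i j)
    (x : ι → ℝ) :
    fderiv ℝ (sinkhornMap a b K) x = LinearMap.toContinuousLinearMap (toLin' (
      diagonal (K *ᵥ (b / (Kᵀ *ᵥ (Real.exp ∘ x))))⁻¹ *
        (K * diagonal (b / (Kᵀ *ᵥ (Real.exp ∘ x)) ^ 2) * Kᵀ) * diagonal (Real.exp ∘ x))) := by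
  set u := Kᵀ *ᵥ (Real.exp ∘ x)
  set w := K *ᵥ (b / u)
  have hu : ∀ j, 0 < u j := mulVec_pos_of_pos (fun j i => hK i j) fun i => Real.exp_pos (x i)
  have hw : ∀ i, 0 < w i := mulVec_div_mulVec_exp_pos hb hK x
  have hExp : HasFDerivAt (fun y i => Real.exp (y i))
      (LinearMap.toContinuousLinearMap (toLin' (diagonal (Real.exp ∘ x)))) x :=
    hasFDerivAt_pi_map fun i => Real.hasDerivAt_exp (x i)
  have hDiv : HasFDerivAt (fun v j => b j / v j)
      (LinearMap.toContinuousLinearMap (toLin' (diagonal fun j => -(b j / u j ^ 2)))) u :=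
    hasFDerivAt_pi_map fun j => by
      have hdiv := (hasDerivAt_const (u j) (b j)).div (hasDerivAt_id (u j)) (hu j).ne'
      exact hdiv.congr_deriv (by simp only [id]; ring)
  have hLog : HasFDerivAt (fun v i => Real.log (a i) - Real.log (v i))
      (LinearMap.toContinuousLinearMap (toLin' (diagonal fun i => -(w i)⁻¹))) w :=
    hasFDerivAt_pi_map fun i => by
      simpa using (Real.hasDerivAt_log (hw i).ne').const_sub (Real.log (a i))
  have hChain := hLog.comp x <| (hasFDerivAt_mulVec K _).comp x <|
    hDiv.comp x <| (hasFDerivAt_mulVec Kᵀ _).comp x hExp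
  simp only [toContinuousLinearMap_toLin'_comp, ← diagonal_neg, Matrix.neg_mul, Matrix.mul_neg,
    neg_neg] at hChain
  refine HasFDerivAt.fderiv ?_
  unfold sinkhornMap
  simp only [Matrix.mul_assoc]
  exact hChain

end Sinkhorn

theorem sinkhorn_jacobian_diagonalizable_general
    (n m : ℕ) (hn : 0 < n) (hm : 0 < m)
    (a : Fin n → ℝ) (b : Fin m → ℝ) (K : Matrix (Fin n) (Fin m) ℝ)
    (hb_pos : ∀ j, 0 < b j)
    (hK_pos : ∀ i j, 0 < K i j)
    (F : (Fin n → ℝ) → Fin n → ℝ)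
    (hF : ∀ x i, F x i = Real.log (a i) -
      Real.log (∑ j, K i j * (b j / ∑ i', K i' j * Real.exp (x i'))))
    (J : (Fin n → ℝ) → Matrix (Fin n) (Fin n) ℝ)
    (hJ : ∀ x j i, J x j i = fderiv ℝ F x (Pi.single i 1) j) :
    ∀ x : Fin n → ℝ, ∃ (Q : Matrix (Fin n) (Fin n) ℝ) (d : Fin n → ℝ),
      IsUnit Q.det ∧ J x = Q * Matrix.diagonal d * Q⁻¹ := by
  have : Nonempty (Fin n) := Fin.pos_iff_nonempty.1 hn
  have : Nonempty (Fin m) := Fin.pos_iff_nonempty.1 hm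
  have hF_eq : F = sinkhornMap a b K := by
    funext x i
    simp [hF, sinkhornMap, mulVec, dotProduct]
  intro x
  have hJx : J x = LinearMap.toMatrix' (fderiv ℝ F x : (Fin n → ℝ) →ₗ[ℝ] Fin n → ℝ) := by
    ext j i
    rw [hJ, LinearMap.toMatrix'_apply]
    rfl
  rw [hJx, hF_eq, fderiv_sinkhornMap a hb_pos hK_pos, LinearMap.coe_toContinuousLinearMap,
    LinearMap.toMatrix'_toLin']
  have hM : (K * diagonal (b / (Kᵀ *ᵥ (Real.exp ∘ x)) ^ 2) * Kᵀ).IsHermitian := by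
    simpa using isHermitian_mul_mul_conjTranspose K (isHermitian_diagonal _)
  exact hM.isDiagonalizable_diagonal_mul_mul_diagonal
    (fun i => inv_pos.2 (mulVec_div_mulVec_exp_pos hb_pos hK_pos x i))
    (fun i => Real.exp_pos (x i))

/-- The Jacobian of the Sinkhorn map `F` is diagonalizable over `ℝ`: there exist an
invertible `Q` and a diagonal matrix `D` with `(dF/dx)(x) = Q D Q⁻¹`. -/
theorem sinkhorn_jacobian_diagonalizable
    (n m : ℕ) (hn : 0 < n) (hm : 0 < m)
    (a : Fin n → ℝ) (b : Fin m → ℝ) (K : Matrix (Fin n) (Fin m) ℝ)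
    (ha_pos : ∀ i, 0 < a i) (ha_sum : ∑ i, a i = 1)
    (hb_pos : ∀ j, 0 < b j) (hb_sum : ∑ j, b j = 1)
    (hK_pos : ∀ i j, 0 < K i j)
    (F : (Fin n → ℝ) → Fin n → ℝ)
    (hF : ∀ x i, F x i = Real.log (a i) -
      Real.log (∑ j, K i j * (b j / ∑ i', K i' j * Real.exp (x i'))))
    (J : (Fin n → ℝ) → Matrix (Fin n) (Fin n) ℝ)
    (hJ : ∀ x j i, J x j i = fderiv ℝ F x (Pi.single i 1) j) :
    ∀ x : Fin n → ℝ, ∃ (Q : Matrix (Fin n) (Fin n) ℝ) (d : Fin n → ℝ),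
      IsUnit Q.det ∧ J x = Q * Matrix.diagonal d * Q⁻¹ :=
  sinkhorn_jacobian_diagonalizable_general n m hn hm a b K hb_pos hK_pos F hF J hJ
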